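/- Let f : 𝕋 → ℂ be a continuous function on the circle 𝕋 = AddCircle (2π), let n ≥ 1, let p ≥ 1, and let α ∈ ℂ satisfy α^n = 1. Then (∑_{k=0}^{n−1} α^k S_{2πk/n} f)^{⋆p} = n^{p−1} · ∑_{j=0}^{n−1} α^j S_{2πj/n} (f^{⋆p}), where h^{⋆p} denotes the p-fold convolution h ⋆ h ⋆ ⋯ ⋆ h and S_{2πk/n} denotes the shift by the image of the real number 2πk/n in 𝕋. -/

import Mathlib

open MeasureTheory Real Set Pointwise

noncomputable section

abbrev 𝕋 : Type := AddCircle (2 * π)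

instance : Fact (0 < 2 * π) := ⟨by positivity⟩

/-- Natural projection `ℝ → 𝕋`. -/
def proj : ℝ → 𝕋 := fun r => (r : 𝕋)

/-- Convolution of functions on the circle with respect to Haar (Lebesgue) measure. -/
def circConv (f g : 𝕋 → ℂ) : 𝕋 → ℂ := fun x => ∫ t : 𝕋, f t * g (x - t)

/-- Shift operator `(S_y f)(x) = f (x - y)`. -/
def shift (y : 𝕋) (f : 𝕋 → ℂ) : 𝕋 → ℂ := fun x => f (x - y)

/-- `circConvPow f k` is the `(k+1)`-fold convolution `f ⋆ f ⋆ ⋯ ⋆ f`. -/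
def circConvPow (f : 𝕋 → ℂ) : ℕ → (𝕋 → ℂ)
  | 0 => f
  | k + 1 => circConv (circConvPow f k) f

/-!
Write `R h = ∑ₖ α ^ k • S_{2πk/n} h` (`rootShiftSum n α h`). Convolution commutes with
translations, so
`(α ^ j • S_{2πj/n} h) ⋆ (α ^ k • S_{2πk/n} g) = α ^ (j + k) • S_{2π(j+k)/n} (h ⋆ g)`.
Since `α ^ n = 1` and `2π = 0` in `𝕋`, this depends only on `j + k` modulo `n`, so for each of
the `n` values of `j` the sum over `k` is all of `R (h ⋆ g)`. Hence `R h ⋆ R g = n • R (h ⋆ g)`,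
and induction on the number of factors gives `(R f) ^ {⋆p} = n ^ (p - 1) • R (f ^ {⋆p})`.
-/

theorem Function.Periodic.sum_range_add {M : Type*} [AddCommMonoid M] {φ : ℕ → M} {n : ℕ}
    (h : Function.Periodic φ n) (j : ℕ) :
    ∑ k ∈ Finset.range n, φ (j + k) = ∑ k ∈ Finset.range n, φ k := by
  induction j with
  | zero => simp
  | succ j ih =>
    rw [← ih]
    rcases n with _ | m
    · simp
    rw [Finset.sum_range_succ, Finset.sum_range_succ' (fun k => φ (j + k)), add_zero,
      show j + 1 + m = j + (m + 1) by omega, h j]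
    simp only [add_assoc, add_comm 1]

lemma Continuous.shift (y : 𝕋) {f : 𝕋 → ℂ} (hf : Continuous f) : Continuous (shift y f) :=
  hf.comp (continuous_id.sub continuous_const)

lemma Continuous.circConv {f g : 𝕋 → ℂ} (hf : Continuous f) (hg : Continuous g) :
    Continuous (circConv f g) :=
  (HasCompactSupport.of_compactSpace g).continuous_convolution_right (ContinuousLinearMap.mul ℝ ℂ)
    (hf.integrable_of_hasCompactSupport (.of_compactSpace f)).locallyIntegrable hg

lemma Continuous.circConvPow {f : 𝕋 → ℂ} (hf : Continuous f) (q : ℕ) :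
    Continuous (circConvPow f q) := by
  induction q with
  | zero => exact hf
  | succ q ih => exact ih.circConv hf

lemma circConv_shift_shift (a b : 𝕋) (f g : 𝕋 → ℂ) :
    circConv (shift a f) (shift b g) = shift (a + b) (circConv f g) := by
  funext x
  have h_sub (t : 𝕋) : x - t - b = x - (a + b) - (t - a) := by abel
  simp only [circConv, shift, h_sub]
  exact integral_sub_right_eq_self (fun u => f u * g (x - (a + b) - u)) a

lemma circConv_const_mul_left (c : ℂ) (f g : 𝕋 → ℂ) :
    circConv (fun y => c * f y) g = fun x => c * circConv f g x := by
  funext x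
  simp only [circConv, mul_assoc]
  exact integral_const_mul c _

lemma circConv_const_mul_right (c : ℂ) (f g : 𝕋 → ℂ) :
    circConv f (fun y => c * g y) = fun x => c * circConv f g x := by
  funext x
  simp only [circConv, mul_left_comm _ c]
  exact integral_const_mul c _

lemma circConv_sum_sum {ι κ : Type*} (s : Finset ι) (t : Finset κ) {f : ι → 𝕋 → ℂ}
    {g : κ → 𝕋 → ℂ} (hf : ∀ i, Continuous (f i)) (hg : ∀ j, Continuous (g j)) (x : 𝕋) :
    circConv (fun y => ∑ i ∈ s, f i y) (fun y => ∑ j ∈ t, g j y) x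
      = ∑ i ∈ s, ∑ j ∈ t, circConv (f i) (g j) x := by
  have h_int (i : ι) (j : κ) : Integrable fun u => f i u * g j (x - u) :=
    ((hf i).mul ((hg j).comp (continuous_const.sub continuous_id))).integrable_of_hasCompactSupport
      (.of_compactSpace _)
  simp only [circConv, Finset.sum_mul_sum]
  rw [integral_finsetSum s fun i _ => integrable_finsetSum t fun j _ => h_int i j]
  exact Finset.sum_congr rfl fun i _ => integral_finsetSum t fun j _ => h_int i j

def rootShiftSum (n : ℕ) (α : ℂ) (h : 𝕋 → ℂ) (x : 𝕋) : ℂ :=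
  ∑ k : Fin n, α ^ (k : ℕ) * shift (proj (2 * π * k / n)) h x

lemma periodic_rootShift {n : ℕ} {α : ℂ} (hα : α ^ n = 1) (h : 𝕋 → ℂ) (x : 𝕋) :
    Function.Periodic (fun m : ℕ => α ^ m * shift (proj (2 * π * m / n)) h x) n := by
  intro m
  rcases n.eq_zero_or_pos with rfl | _
  · simp
  have h_arg : 2 * π * ↑(m + n) / n = 2 * π * m / n + 2 * π := by
    field_simp
    push_cast
    ring
  simp only [proj, h_arg, AddCircle.coe_add_period, pow_add, hα, mul_one]

theorem circConv_rootShiftSum {n : ℕ} {α : ℂ} (hα : α ^ n = 1) {h g : 𝕋 → ℂ}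
    (hh : Continuous h) (hg : Continuous g) :
    circConv (rootShiftSum n α h) (rootShiftSum n α g)
      = fun x => n * rootShiftSum n α (circConv h g) x := by
  funext x
  set φ : ℕ → ℂ := fun m => α ^ m * shift (proj (2 * π * m / n)) (circConv h g) x
  have hφ : Function.Periodic φ n := periodic_rootShift hα _ x
  have h_term (j k : ℕ) :
      circConv (fun y => α ^ j * shift (proj (2 * π * j / n)) h y)
        (fun y => α ^ k * shift (proj (2 * π * k / n)) g y) x = φ (j + k) := by
    have h_arg : 2 * π * j / n + 2 * π * k / n = 2 * π * ↑(j + k) / n := by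
      push_cast
      ring
    rw [circConv_const_mul_left, circConv_const_mul_right, circConv_shift_shift, proj,
      proj, ← AddCircle.coe_add, h_arg]
    simp only [φ, proj, pow_add, mul_assoc]
  calc circConv (rootShiftSum n α h) (rootShiftSum n α g) x
      = ∑ j : Fin n, ∑ k : Fin n, φ (j + k) := by
        simp only [← h_term]
        exact circConv_sum_sum _ _ (fun _ => continuous_const.mul (hh.shift _))
          (fun _ => continuous_const.mul (hg.shift _)) x
    _ = ∑ _j : Fin n, ∑ k : Fin n, φ k := Finset.sum_congr rfl fun j _ => by
        rw [Fin.sum_univ_eq_sum_range (fun k => φ (j + k)), Fin.sum_univ_eq_sum_range φ,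
          hφ.sum_range_add]
    _ = n * rootShiftSum n α (circConv h g) x := by
        simp [rootShiftSum, φ]

theorem circConvPow_rootShiftSum {n : ℕ} {α : ℂ} (hα : α ^ n = 1) {f : 𝕋 → ℂ}
    (hf : Continuous f) (q : ℕ) :
    circConvPow (rootShiftSum n α f) q
      = fun x => (n : ℂ) ^ q * rootShiftSum n α (circConvPow f q) x := by
  induction q with
  | zero => simp [circConvPow]
  | succ q ih =>
    simp only [circConvPow, ih, circConv_const_mul_left,
      circConv_rootShiftSum hα (hf.circConvPow q) hf, pow_succ, mul_assoc]

theorem conv_power_of_root_of_unity_combination_general (n p : ℕ)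
    (f : 𝕋 → ℂ) (hf : Continuous f) (α : ℂ) (hα : α ^ n = 1) :
    circConvPow (fun x => ∑ k : Fin n, α ^ (k : ℕ) * shift (proj (2 * π * k / n)) f x) (p - 1)
    = fun x => (n : ℂ) ^ (p - 1) *
        ∑ j : Fin n, α ^ (j : ℕ) * shift (proj (2 * π * j / n)) (circConvPow f (p - 1)) x :=
  circConvPow_rootShiftSum hα hf (p - 1)

theorem conv_power_of_root_of_unity_combination (n p : ℕ) (hn : 1 ≤ n) (hp : 1 ≤ p)
    (f : 𝕋 → ℂ) (hf : Continuous f) (α : ℂ) (hα : α ^ n = 1) :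
    circConvPow (fun x => ∑ k : Fin n, α ^ (k : ℕ) * shift (proj (2 * π * k / n)) f x) (p - 1)
    = fun x => (n : ℂ) ^ (p - 1) *
        ∑ j : Fin n, α ^ (j : ℕ) * shift (proj (2 * π * j / n)) (circConvPow f (p - 1)) x :=
  conv_power_of_root_of_unity_combination_general n p f hf α hα

end
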